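/- For λ>0 and μ∈ℝ, the bracket on H = ℝ[A,B,D]/(AD−B²−1) defined by {A,B} = 2λA(A+D+μ), {A,D} = 4λB(A+D+μ), {B,D} = 2λD(A+D+μ) satisfies the Jacobi identity and is compatible with the relation AD−B²=1. -/

import Mathlib

open MvPolynomial

noncomputable section

/-- The polynomial ring `ℝ[A,B,D]` with `A = X 0, B = X 1, D = X 2`. -/
abbrev R3 : Type := MvPolynomial (Fin 3) ℝ

/-- The biderivation determined by the matrix `Pm` of brackets of generators. -/
def pb (Pm : Fin 3 → Fin 3 → R3) (f g : R3) : R3 :=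
  ∑ i : Fin 3, ∑ j : Fin 3, Pm i j * pderiv i f * pderiv j g

def A : R3 := X 0
def B : R3 := X 1
def D : R3 := X 2

/-- The K-type bracket on `H`: `{A,B} = 2λA(A+D+μ)`, `{A,D} = 4λB(A+D+μ)`,
`{B,D} = 2λD(A+D+μ)`. -/
def PH (lam μ : ℝ) : Fin 3 → Fin 3 → R3 :=
  ![ ![0, C (2*lam) * (A * (A + D + C μ)), C (4*lam) * (B * (A + D + C μ))],
     ![-(C (2*lam) * (A * (A + D + C μ))), 0, C (2*lam) * (D * (A + D + C μ))],
     ![-(C (4*lam) * (B * (A + D + C μ))), -(C (2*lam) * (D * (A + D + C μ))), 0] ]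

/-!
The Jacobiator of an antisymmetric biderivation is a derivation in each argument and is
invariant under cyclic permutations, so it vanishes identically as soon as it vanishes on
triples of generators, where it equals `∑ₗ (P i l ∂ₗ P j k + P j l ∂ₗ P k i + P k l ∂ₗ P i j)`.
For the bracket `PH` this is a finite polynomial identity. Compatibility with the relation
holds because `AD - B²` is a Casimir: its bracket with every polynomial is already zero.
-/

section Bracket

variable (P : Fin 3 → Fin 3 → R3)

lemma pb_X_left (i : Fin 3) (g : R3) : pb P (X i) g = ∑ j, P i j * pderiv j g := by
  simp [pb, pderiv_X, Pi.single_apply]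

lemma pb_X_X (i j : Fin 3) : pb P (X i) (X j) = P i j := by
  simp [pb_X_left, pderiv_X, Pi.single_apply]

lemma pb_C_left (a : ℝ) (g : R3) : pb P (C a) g = 0 := by
  simp [pb]

lemma pb_C_right (f : R3) (a : ℝ) : pb P f (C a) = 0 := by
  simp [pb]

lemma pb_add_left (f₁ f₂ g : R3) : pb P (f₁ + f₂) g = pb P f₁ g + pb P f₂ g := by
  simp only [pb, map_add, mul_add, add_mul, Finset.sum_add_distrib]

lemma pb_add_right (f g₁ g₂ : R3) : pb P f (g₁ + g₂) = pb P f g₁ + pb P f g₂ := by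
  simp only [pb, map_add, mul_add, Finset.sum_add_distrib]

lemma pb_mul_left (f₁ f₂ g : R3) : pb P (f₁ * f₂) g = f₁ * pb P f₂ g + f₂ * pb P f₁ g := by
  simp only [pb, Derivation.leibniz, smul_eq_mul, Finset.mul_sum, ← Finset.sum_add_distrib]
  congr! 2; ring

lemma pb_mul_right (f g₁ g₂ : R3) : pb P f (g₁ * g₂) = g₁ * pb P f g₂ + g₂ * pb P f g₁ := by
  simp only [pb, Derivation.leibniz, smul_eq_mul, Finset.mul_sum, ← Finset.sum_add_distrib]
  congr! 2; ring

lemma pb_swap (hP : ∀ i j, P j i = -P i j) (f g : R3) : pb P g f = -pb P f g := by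
  rw [pb, pb, Finset.sum_comm, ← Finset.sum_neg_distrib]
  refine Finset.sum_congr rfl fun i _ => ?_
  rw [← Finset.sum_neg_distrib]
  refine Finset.sum_congr rfl fun j _ => ?_
  rw [hP]; ring

def jacobiator (f g h : R3) : R3 :=
  pb P f (pb P g h) + pb P g (pb P h f) + pb P h (pb P f g)

lemma jacobiator_rotate (f g h : R3) : jacobiator P f g h = jacobiator P g h f := by
  simp only [jacobiator]; ring

lemma jacobiator_C_left (a : ℝ) (g h : R3) : jacobiator P (C a) g h = 0 := by
  simp only [jacobiator, pb_C_left, pb_C_right]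
  simp [pb]

lemma jacobiator_add_left (f₁ f₂ g h : R3) :
    jacobiator P (f₁ + f₂) g h = jacobiator P f₁ g h + jacobiator P f₂ g h := by
  simp only [jacobiator, pb_add_left, pb_add_right]; ring

lemma jacobiator_mul_left (hP : ∀ i j, P j i = -P i j) (f₁ f₂ g h : R3) :
    jacobiator P (f₁ * f₂) g h = f₁ * jacobiator P f₂ g h + f₂ * jacobiator P f₁ g h := by
  simp only [jacobiator, pb_mul_left, pb_mul_right, pb_add_right]
  rw [pb_swap P hP f₁ g, pb_swap P hP f₂ g]
  ring

lemma jacobiator_X_X_X (i j k : Fin 3) : jacobiator P (X i) (X j) (X k) =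
    ∑ l, (P i l * pderiv l (P j k) + P j l * pderiv l (P k i) + P k l * pderiv l (P i j)) := by
  simp only [jacobiator, pb_X_X]
  simp only [pb_X_left, Finset.sum_add_distrib]

lemma jacobiator_eq_zero_of_X (hP : ∀ i j, P j i = -P i j)
    (hX : ∀ i j k, jacobiator P (X i) (X j) (X k) = 0) (f g h : R3) :
    jacobiator P f g h = 0 := by
  have extend (g h : R3) (hgh : ∀ i, jacobiator P (X i) g h = 0) (f : R3) :
      jacobiator P f g h = 0 := by
    induction f using MvPolynomial.induction_on with
    | C a => exact jacobiator_C_left P a g h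
    | add p q hp hq => rw [jacobiator_add_left, hp, hq, add_zero]
    | mul_X p i hp => rw [jacobiator_mul_left P hP, hp, hgh, mul_zero, mul_zero, add_zero]
  refine extend g h (fun i => ?_) f
  rw [jacobiator_rotate]
  refine extend h (X i) (fun j => ?_) g
  rw [jacobiator_rotate]
  exact extend (X i) (X j) (fun k => hX k i j) h

end Bracket

lemma PH_swap (lam μ : ℝ) (i j : Fin 3) : PH lam μ j i = -PH lam μ i j := by
  fin_cases i <;> fin_cases j <;> simp [PH]

lemma jacobiator_PH_X_X_X (lam μ : ℝ) (i j k : Fin 3) :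
    jacobiator (PH lam μ) (X i) (X j) (X k) = 0 := by
  rw [jacobiator_X_X_X]
  fin_cases i <;> fin_cases j <;> fin_cases k <;>
    simp [PH, Fin.sum_univ_three, -map_mul] <;>
    -- only now may `C (2 * lam)` be split: `map_ofNat` would turn `C 2` into a `2` that
    -- `pderiv` no longer simplifies
    simp [A, B, D, pderiv_X, map_ofNat] <;> ring

lemma pb_PH_relation_right (lam μ : ℝ) (f : R3) :
    pb (PH lam μ) f (A * D - B ^ 2 - 1) = 0 := by
  simp [pb, PH, A, B, D, Fin.sum_univ_three, pderiv_X, Pi.single_apply, map_ofNat]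
  ring

theorem stmt_12_general (lam μ : ℝ) :
    (∀ f g h : R3,
      pb (PH lam μ) f (pb (PH lam μ) g h) + pb (PH lam μ) g (pb (PH lam μ) h f) +
        pb (PH lam μ) h (pb (PH lam μ) f g) = 0) ∧
    (∀ i : Fin 3,
      pb (PH lam μ) (X i) (A * D - B ^ 2 - 1) ∈
        Ideal.span {(A * D - B ^ 2 - 1 : R3)}) :=
  ⟨jacobiator_eq_zero_of_X _ (PH_swap lam μ) (jacobiator_PH_X_X_X lam μ),
    fun i => pb_PH_relation_right lam μ (X i) ▸ Ideal.zero_mem _⟩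

/-- For `λ > 0` and `μ ∈ ℝ`, the bracket `{A,B}=2λA(A+D+μ)`, `{A,D}=4λB(A+D+μ)`,
`{B,D}=2λD(A+D+μ)` satisfies the Jacobi identity and is compatible with the relation
`AD − B² = 1`. -/
theorem stmt_12 (lam μ : ℝ) (hlam : 0 < lam) :
    (∀ f g h : R3,
      pb (PH lam μ) f (pb (PH lam μ) g h) + pb (PH lam μ) g (pb (PH lam μ) h f) +
        pb (PH lam μ) h (pb (PH lam μ) f g) = 0) ∧
    (∀ i : Fin 3,
      pb (PH lam μ) (X i) (A * D - B ^ 2 - 1) ∈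
        Ideal.span {(A * D - B ^ 2 - 1 : R3)}) :=
  stmt_12_general lam μ
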